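/- Let a, b, c be the tree automorphisms of the binary tree defined by the wreath recursions a = σ(b,a), b = (c,b), c = (b,a) (automaton number 857). Then the element b has infinite order; indeed, the forward orbit of the boundary point 010000… under b is infinite. -/

import Mathlib

/-- An invertible automaton over the two-letter alphabet `Bool`:
a set of states `Q`, a transition map and an output map such that each state
acts on the alphabet by a permutation. -/
structure BinAutomaton (Q : Type*) where
  trans : Q → Bool → Q
  out : Q → Bool → Bool
  out_bij : ∀ q, Function.Bijective (out q)

namespace BinAutomaton

variable {Q : Type*} (A : BinAutomaton Q)

/-- The action of a state on finite binary words: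
`q(xw) = ρ(q,x) · (τ(q,x))(w)`. -/
def act : Q → List Bool → List Bool
  | _, [] => []
  | q, x :: w => A.out q x :: act (A.trans q x) w

theorem act_injective (q : Q) : Function.Injective (A.act q) := by
  intro u
  induction u generalizing q with
  | nil =>
    intro v h
    cases v with
    | nil => rfl
    | cons y v => simp [act] at h
  | cons x u ih =>
    intro v h
    cases v with
    | nil => simp [act] at h
    | cons y v =>
      simp only [act, List.cons.injEq] at h
      obtain ⟨h1, h2⟩ := h
      obtain rfl : x = y := (A.out_bij q).1 h1
      rw [ih _ h2]

theorem act_surjective (q : Q) : Function.Surjective (A.act q) := by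
  intro v
  induction v generalizing q with
  | nil => exact ⟨[], rfl⟩
  | cons y v ih =>
    obtain ⟨x, hx⟩ := (A.out_bij q).2 y
    obtain ⟨w, hw⟩ := ih (A.trans q x)
    exact ⟨x :: w, by simp [act, hx, hw]⟩

/-- The tree automorphism defined by the state `q`. -/
noncomputable def perm (q : Q) : Equiv.Perm (List Bool) :=
  Equiv.ofBijective (A.act q) ⟨A.act_injective q, A.act_surjective q⟩

/-- The group generated by the automaton: the subgroup of the group of
bijections of the binary tree generated by the states. -/
noncomputable def autGroup : Subgroup (Equiv.Perm (List Bool)) :=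
  Subgroup.closure (Set.range A.perm)

end BinAutomaton

/-- Helper constructing a 3-state automaton from the sections at `0`, the
sections at `1`, and the activity of each state. -/
def mkAut3 (t0 t1 : Fin 3 → Fin 3) (actv : Fin 3 → Bool) : BinAutomaton (Fin 3) where
  trans q x := cond x (t1 q) (t0 q)
  out q x := xor (actv q) x
  out_bij q := by
    have h : ∀ b : Bool, Function.Bijective fun x => xor b x := by decide
    exact h (actv q)

namespace BinAutomaton

variable {Q : Type*} (A : BinAutomaton Q)

/-- The state reached after reading a finite word. -/
def run : Q → List Bool → Q
  | q, [] => q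
  | q, x :: w => run (A.trans q x) w

/-- The canonical extension of the action of a state to the boundary of the
tree (the space of infinite binary sequences): the `n`-th output letter is
produced by the state reached after reading the first `n` input letters. -/
def actStream (q : Q) (s : Stream' Bool) : Stream' Bool :=
  fun n => A.out (A.run q (Stream'.take n s)) (s n)

end BinAutomaton

/-- Automaton number 857:
`a = σ(b,a)`, `b = (c,b)`, `c = (b,a)` (states `0 = a`, `1 = b`, `2 = c`). -/
def A857 : BinAutomaton (Fin 3) :=
  mkAut3 ![1, 2, 1] ![0, 1, 0] ![true, false, false]

noncomputable def b : Equiv.Perm (List Bool) := A857.perm 1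

/-- The boundary point `010000…`. -/
def pt : Stream' Bool := fun n => decide (n = 1)

/-!
Read a binary sequence as a little-endian binary number. The states of automaton 857 map
`binStream m` to `binStream (natAct857 q m)`, and in these coordinates `a` strictly increases
every number while `b` and `c` do not decrease it. Since `b(01w) = 01·a(w)`, the `b`-orbit of
`010000… = binStream 2` consists of the numbers `4·aⁿ(0) + 2`, which strictly increase, so the
orbit is infinite. Finally `bᵏ = 1` on finite words would make `bᵏ` fix every boundary point.
-/

open Stream'

def binStream (m : ℕ) : Stream' Bool := fun i => m.testBit i

theorem binStream_injective : Function.Injective binStream := fun _ _ h =>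
  Nat.eq_of_testBit_eq fun i => congrFun h i

theorem binStream_bit (x : Bool) (m : ℕ) : binStream (Nat.bit x m) = x :: binStream m := by
  funext i
  cases i with
  | zero => exact Nat.testBit_bit_zero x m
  | succ i => exact Nat.testBit_bit_succ i x m

namespace BinAutomaton

variable {Q : Type*} (A : BinAutomaton Q)

theorem actStream_cons (q : Q) (x : Bool) (s : Stream' Bool) :
    A.actStream q (x :: s) = A.out q x :: A.actStream (A.trans q x) s := by
  funext n
  cases n <;> rfl

theorem act_take : ∀ (n : ℕ) (q : Q) (s : Stream' Bool),
    A.act q (s.take n) = (A.actStream q s).take n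
  | 0, _, _ => rfl
  | n + 1, q, s => by
    conv_rhs => rw [← Stream'.eta s]
    rw [A.actStream_cons, take_succ_cons, take_succ, act, act_take n]

theorem iterate_act_take (q : Q) (k n : ℕ) (s : Stream' Bool) :
    (A.act q)^[k] (s.take n) = ((A.actStream q)^[k] s).take n := by
  induction k with
  | zero => rfl
  | succ k ih => rw [Function.iterate_succ_apply', Function.iterate_succ_apply', ih, act_take]

theorem iterate_actStream_eq_id_of_perm_pow_eq_one {q : Q} {k : ℕ} (h : A.perm q ^ k = 1) :
    (A.actStream q)^[k] = id := by
  have hact : (A.act q)^[k] = id :=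
    (Equiv.Perm.coe_pow (A.perm q) k).symm.trans (congrArg DFunLike.coe h)
  funext s
  refine take_theorem _ _ fun n => ?_
  rw [← iterate_act_take, hact, id, id]

theorem semiconj_binStream {F : Q → ℕ → ℕ}
    (hF : ∀ q x m, F q (Nat.bit x m) = Nat.bit (A.out q x) (F (A.trans q x) m)) (q : Q) :
    Function.Semiconj binStream (F q) (A.actStream q) := by
  have bit_surj (m : ℕ) : ∃ x n, Nat.bit x n = m := ⟨_, _, Nat.bit_testBit_zero_shiftRight_one m⟩
  intro m
  funext i
  induction i generalizing q m with
  | zero =>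
    obtain ⟨x, n, rfl⟩ := bit_surj m
    rw [hF, binStream_bit, binStream_bit, A.actStream_cons]
    rfl
  | succ i ih =>
    obtain ⟨x, n, rfl⟩ := bit_surj m
    rw [hF, binStream_bit, binStream_bit, A.actStream_cons]
    exact ih _ _

end BinAutomaton

/-- `![1, 0, 0]` records `a(0^ω) = 10^ω` and `b(0^ω) = c(0^ω) = 0^ω`. -/
def natAct857 (q : Fin 3) (m : ℕ) : ℕ :=
  Nat.binaryRec (motive := fun _ => Fin 3 → ℕ) ![1, 0, 0]
    (fun x _ f q => Nat.bit (A857.out q x) (f (A857.trans q x))) m q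

theorem natAct857_bit (q : Fin 3) (x : Bool) (m : ℕ) :
    natAct857 q (Nat.bit x m) = Nat.bit (A857.out q x) (natAct857 (A857.trans q x) m) := by
  unfold natAct857
  -- `0 = bit false 0` is consistent because `![1, 0, 0]` is a fixed point of the recursion
  rw [Nat.binaryRec_eq x m (Or.inl ?_)]
  funext q
  fin_cases q <;> rfl

theorem natAct857_growth (m : ℕ) :
    m < natAct857 0 m ∧ m ≤ natAct857 1 m ∧ m ≤ natAct857 2 m := by
  induction m using Nat.binaryRec with
  | zero => decide
  | bit x m ih =>
    simp only [natAct857_bit]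
    cases x <;>
      simp only [A857, mkAut3, Nat.bit_val, Matrix.cons_val, cond_false, cond_true, Bool.bne_false,
        Bool.bne_true, Bool.not_false, Bool.not_true, Bool.toNat_false, Bool.toNat_true] <;>
      omega

theorem natAct857_one_bit_false_bit_true (t : ℕ) :
    natAct857 1 (Nat.bit false (Nat.bit true t)) = Nat.bit false (Nat.bit true (natAct857 0 t)) := by
  simp only [natAct857_bit]
  rfl

theorem pt_eq_binStream : pt = binStream 2 := by
  funext i
  change decide (i = 1) = Nat.testBit (2 ^ 1) i
  rw [Nat.testBit_two_pow]
  exact decide_eq_decide.mpr eq_comm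

theorem iterate_actStream_one_pt (n : ℕ) :
    (A857.actStream 1)^[n] pt =
      binStream (Nat.bit false (Nat.bit true ((natAct857 0)^[n] 0))) := by
  have hb : Function.Semiconj binStream (natAct857 1) (A857.actStream 1) :=
    A857.semiconj_binStream natAct857_bit 1
  have ha : Function.Semiconj (fun t => Nat.bit false (Nat.bit true t)) (natAct857 0)
      (natAct857 1) := fun t => (natAct857_one_bit_false_bit_true t).symm
  rw [pt_eq_binStream, ← (hb.iterate_right n).eq, (ha.iterate_right n).eq]
  rfl

theorem iterate_actStream_one_pt_injective :
    Function.Injective fun n => (A857.actStream 1)^[n] pt := by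
  have ha : StrictMono fun n => (natAct857 0)^[n] 0 :=
    strictMono_nat_of_lt_succ fun n => by
      rw [Function.iterate_succ_apply']
      exact (natAct857_growth _).1
  have hbits : StrictMono fun t => Nat.bit false (Nat.bit true t) := fun s t hst => by
    simp only [Nat.bit_val]
    omega
  simp only [iterate_actStream_one_pt]
  exact binStream_injective.comp (hbits.comp ha).injective

/-- In the group generated by automaton 857 the element `b` has infinite
order; indeed the forward orbit of the boundary point `010⁰⁰…` under `b` is
infinite. -/
theorem automaton857_b_has_infinite_order :
    ¬ IsOfFinOrder b ∧
    Set.Infinite (Set.range fun n : ℕ => (A857.actStream 1)^[n] pt) := by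
  refine ⟨fun hfin => ?_, Set.infinite_range_of_injective iterate_actStream_one_pt_injective⟩
  obtain ⟨k, hk, hbk⟩ := isOfFinOrder_iff_pow_eq_one.mp hfin
  have hfix : (A857.actStream 1)^[k] pt = (A857.actStream 1)^[0] pt := by
    rw [A857.iterate_actStream_eq_id_of_perm_pow_eq_one hbk]
    rfl
  exact hk.ne' (iterate_actStream_one_pt_injective hfix)
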